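/- Let ω ⊂ ℝ² be a bounded, open, simply connected set with Lipschitz boundary and in-radius R(ω) > 0, and let a < b. Then l(ω) := (b−a) · inf_{0<β≤R(ω)} |ω^β|/β satisfies l(ω) ≥ (b−a) · π · R(ω); equivalently, |{x' ∈ ω : δ(x') < β}| ≥ π R(ω) β for every β ∈ (0, R(ω)]. -/

import Mathlib

open MeasureTheory Real

noncomputable section

abbrev E2 : Type := EuclideanSpace ℝ (Fin 2)
abbrev E3 : Type := E2 × ℝ

/-- Distance from `x` to the complement of `ω` (the distance to the boundary). -/
def distBd (ω : Set E2) (x : E2) : ℝ := Metric.infDist x ωᶜ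

/-- First Heisenberg vector field `X₁ = ∂₁ + (x₂/2)∂₃`. -/
def X1 (u : E3 → ℂ) (x : E3) : ℂ :=
  fderiv ℝ u x (EuclideanSpace.single 0 1, (0 : ℝ)) +
    (x.1 1 / 2 : ℝ) • fderiv ℝ u x ((0 : E2), (1 : ℝ))

/-- Second Heisenberg vector field `X₂ = ∂₂ − (x₁/2)∂₃`. -/
def X2 (u : E3 → ℂ) (x : E3) : ℂ :=
  fderiv ℝ u x (EuclideanSpace.single 1 1, (0 : ℝ)) -
    (x.1 0 / 2 : ℝ) • fderiv ℝ u x ((0 : E2), (1 : ℝ))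

/-- Heisenberg Laplacian `Hu = −X₁²u − X₂²u`. -/
def HeisLap (u : E3 → ℂ) (x : E3) : ℂ := - X1 (X1 u) x - X2 (X2 u) x

/-- `c` is a Hardy constant for `ω`:
`∫_ω |v|²/δ² ≤ c² ∫_ω |∇v|²` for all `v ∈ C_0^∞(ω)`. -/
def IsHardyConst (ω : Set E2) (c : ℝ) : Prop :=
  ∀ v : E2 → ℂ, ContDiff ℝ (⊤ : ℕ∞) v → HasCompactSupport v → tsupport v ⊆ ω →
    (∫ x in ω, ‖v x‖ ^ 2 / (distBd ω x) ^ 2) ≤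
      c ^ 2 * ∫ x in ω, ‖fderiv ℝ v x (EuclideanSpace.single 0 1)‖ ^ 2 +
        ‖fderiv ℝ v x (EuclideanSpace.single 1 1)‖ ^ 2

/-- The in-radius `R(ω) = sup_{x'∈ω} δ(x')`. -/
def inRadius (ω : Set E2) : ℝ := sSup (distBd ω '' ω)

/-- `l(ω) = (b−a)·inf_{0<β≤R(ω)} |ω^β|/β`, where `ω^β = {x' ∈ ω : δ(x') < β}`. -/
def lOmega (ω : Set E2) (a b : ℝ) : ℝ :=
  (b - a) * sInf ((fun β => (volume {x' ∈ ω | distBd ω x' < β}).toReal / β) ''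
    Set.Ioc 0 (inRadius ω))


def eDir (θ : ℝ) : EuclideanSpace ℝ (Fin 2) :=
  cos θ • EuclideanSpace.single 0 1 + sin θ • EuclideanSpace.single 1 1

lemma norm_eDir (θ : ℝ) : ‖eDir θ‖ = 1 := by
  rw [eDir, EuclideanSpace.norm_eq]
  simp [EuclideanSpace.single_apply, Fin.sum_univ_two, sq_abs, sin_sq_add_cos_sq, cos_sq_add_sin_sq]

lemma norm_smul_eDir (t θ : ℝ) : ‖t • eDir θ‖ = |t| := by
  rw [norm_smul, norm_eDir, mul_one, Real.norm_eq_abs]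

def G2 : EuclideanSpace ℝ (Fin 2) ≃ᵐ ℝ × ℝ :=
  (MeasurableEquiv.toLp 2 (Fin 2 → ℝ)).symm.trans (MeasurableEquiv.finTwoArrow)

lemma G2_apply (x : EuclideanSpace ℝ (Fin 2)) : G2 x = (x 0, x 1) := rfl

lemma volume_preserving_G2 : MeasurePreserving G2 :=
  (volume_preserving_finTwoArrow ℝ).comp (EuclideanSpace.volume_preserving_symm_measurableEquiv_toLp (Fin 2))

lemma G2_translate (x₀ : EuclideanSpace ℝ (Fin 2)) (r θ : ℝ) :
    G2 x₀ + (r * cos θ, r * sin θ) = G2 (x₀ + r • eDir θ) := by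
  rw [G2_apply, G2_apply]
  simp [Prod.ext_iff, eDir, EuclideanSpace.single_apply, PiLp.add_apply, PiLp.smul_apply]


open Set in
lemma key_annulus (ω : Set E2) (hω_open : IsOpen ω) (hω_bdd : Bornology.IsBounded ω)
    {β : ℝ} (hβ : 0 < β) {x₀ : E2} {b' : ℝ} (hb'0 : 0 < b')
    (hb'β : b' ≤ β) (hb'δ : b' ≤ distBd ω x₀) :
    π * b' * (2 * distBd ω x₀ - b') ≤ (volume {x' ∈ ω | distBd ω x' < β}).toReal := by
  set δ₀ := distBd ω x₀ with hδ₀def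
  have hδ₀pos : 0 < δ₀ := lt_of_lt_of_le hb'0 hb'δ
  set A : Set E2 := {x' ∈ ω | distBd ω x' < β} with hAdef
  have hdist_cont : Continuous (distBd ω) := by
    unfold distBd; exact Metric.continuous_infDist_pt _
  have hA_open : IsOpen A := hω_open.inter (isOpen_lt hdist_cont continuous_const)
  have hA_sub : A ⊆ ω := fun x hx => hx.1
  obtain ⟨M₀, hM₀⟩ := hω_bdd.subset_ball x₀
  set M : ℝ := max M₀ 1 with hMdef
  have hM0 : 0 < M := lt_of_lt_of_le one_pos (le_max_right _ _)
  have hMball : ω ⊆ Metric.ball x₀ M :=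
    hM₀.trans (Metric.ball_subset_ball (le_max_left _ _))
  have hA_fin : volume A ≠ ⊤ :=
    ((measure_mono (hA_sub.trans hMball)).trans_lt measure_ball_lt_top).ne
  -- the preimage under the measurable equivalence
  set B : Set (ℝ × ℝ) := ⇑G2.symm ⁻¹' A with hBdef
  have hB_meas : MeasurableSet B := G2.symm.measurable hA_open.measurableSet
  have hB_vol : volume B = volume A :=
    (volume_preserving_G2.symm G2).measure_preimage hA_open.measurableSet.nullMeasurableSet
  set c₀ : ℝ × ℝ := G2 x₀ with hc₀def
  set f : ℝ × ℝ → ℝ := fun p => Set.indicator B (1 : ℝ × ℝ → ℝ) (c₀ + p) with hfdef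
  have hmemB : ∀ r θ : ℝ, c₀ + (r * cos θ, r * sin θ) ∈ B ↔ x₀ + r • eDir θ ∈ A := by
    intro r θ
    rw [hc₀def, G2_translate, hBdef, Set.mem_preimage, MeasurableEquiv.symm_apply_apply]
  have hf_meas : Measurable f :=
    (measurable_one.indicator hB_meas).comp (measurable_const.add measurable_id)
  have hf_nonneg : ∀ p, 0 ≤ f p := fun p => Set.indicator_nonneg (fun _ _ => zero_le_one) _
  have hf_le_one : ∀ p, f p ≤ 1 := fun p => Set.indicator_le_self' (fun _ _ => zero_le_one) _
  -- step 1 : volume as an integral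
  have h1 : (volume A).toReal = ∫ p : ℝ × ℝ, f p := by
    rw [hfdef]
    rw [integral_add_left_eq_self (μ := volume) (Set.indicator B (1 : ℝ × ℝ → ℝ)) c₀]
    rw [integral_indicator_one hB_meas, measureReal_def, hB_vol]
  have hsymm_eq : ∀ p : ℝ × ℝ, polarCoord.symm p = (p.1 * cos p.2, p.1 * sin p.2) := fun p => rfl
  have h2 : ∫ p : ℝ × ℝ, f p =
      ∫ p in polarCoord.target, p.1 • f (polarCoord.symm p) :=
    (integral_comp_polarCoord_symm f).symm
  set g : ℝ × ℝ → ℝ :=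
    Set.indicator polarCoord.target (fun p => p.1 * f (polarCoord.symm p)) with hgdef
  have h3 : ∫ p in polarCoord.target, p.1 • f (polarCoord.symm p) = ∫ p : ℝ × ℝ, g p := by
    rw [hgdef, integral_indicator polarCoord.open_target.measurableSet]
    simp_rw [smul_eq_mul]
  have hg_nonneg : ∀ p, 0 ≤ g p := by
    intro p
    rw [hgdef]
    apply Set.indicator_nonneg
    rintro q hq
    exact mul_nonneg (le_of_lt hq.1) (hf_nonneg _)
  have hg_meas : Measurable g := by
    have hsymm_cont : Continuous (fun p : ℝ × ℝ => polarCoord.symm p) := by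
      simp only [hsymm_eq]
      fun_prop
    exact ((measurable_fst.mul (hf_meas.comp hsymm_cont.measurable)).indicator
      polarCoord.open_target.measurableSet)
  -- support and integrability of g
  set S : Set (ℝ × ℝ) := Set.Ioo (0:ℝ) M ×ˢ Set.Ioo (-π) π with hSdef
  have hg_supp : ∀ p, p ∉ S → g p = 0 := by
    intro p hp
    by_contra hgp
    obtain ⟨hpt, hval⟩ := Set.indicator_apply_ne_zero.mp hgp
    have hr : 0 < p.1 := hpt.1
    have hθ : p.2 ∈ Set.Ioo (-π) π := hpt.2
    have hfne : f (polarCoord.symm p) ≠ 0 := by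
      intro h0; rw [Function.mem_support] at hval; exact hval (by rw [h0, mul_zero])
    have hfmem : x₀ + p.1 • eDir p.2 ∈ A := by
      rw [hfdef] at hfne
      simp only [Set.indicator_apply_ne_zero, Function.mem_support] at hfne
      have := hfne.1
      rwa [hsymm_eq, hmemB] at this
    have : dist (x₀ + p.1 • eDir p.2) x₀ < M := hMball (hA_sub hfmem)
    rw [dist_eq_norm, add_sub_cancel_left, norm_smul_eDir, abs_of_pos hr] at this
    exact hp ⟨⟨hr, this⟩, hθ⟩
  have hS_fin : volume S ≠ ⊤ := by
    rw [hSdef]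
    refine (measure_mono (Set.prod_mono Set.Ioo_subset_Icc_self Set.Ioo_subset_Icc_self)).trans_lt
      ?_ |>.ne
    exact Bornology.IsBounded.measure_lt_top
      ((Metric.isBounded_Icc (0:ℝ) M).prod (Metric.isBounded_Icc (-π) π))
  have hg_int : Integrable g := by
    have : g = S.indicator g := by
      funext p
      by_cases hp : p ∈ S
      · rw [Set.indicator_of_mem hp]
      · rw [Set.indicator_of_notMem hp, hg_supp p hp]
    rw [this]
    rw [integrable_indicator_iff (by rw [hSdef]; exact measurableSet_Ioo.prod measurableSet_Ioo)]
    apply Measure.integrableOn_of_bounded hS_fin hg_meas.aestronglyMeasurable (M := M)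
    filter_upwards [ae_restrict_mem (by rw [hSdef]; exact measurableSet_Ioo.prod measurableSet_Ioo)]
      with p hp
    rw [Real.norm_eq_abs, abs_of_nonneg (hg_nonneg p), hgdef]
    by_cases hpt : p ∈ polarCoord.target
    · rw [Set.indicator_of_mem hpt]
      calc p.1 * f (polarCoord.symm p)
          ≤ p.1 * 1 := mul_le_mul_of_nonneg_left (hf_le_one _) (le_of_lt hp.1.1)
        _ ≤ M := by rw [mul_one]; exact le_of_lt hp.1.2
    · rw [Set.indicator_of_notMem hpt]; exact le_of_lt hM0
  -- Fubini
  have volume_eq : (volume : Measure (ℝ × ℝ)) = (volume : Measure ℝ).prod volume :=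
    Measure.volume_eq_prod ℝ ℝ
  have hg_int' : Integrable g ((volume : Measure ℝ).prod volume) := by rwa [← volume_eq]
  have h4 : ∫ p : ℝ × ℝ, g p = ∫ θ : ℝ, (∫ r : ℝ, g (r, θ)) := by
    rw [volume_eq]; exact integral_prod_symm g hg_int'
  set c : ℝ := b' * δ₀ - b' ^ 2 / 2 with hcdef
  have hc0 : 0 ≤ c := by rw [hcdef]; nlinarith [hb'δ, hb'0]
  have hecont : ∀ θ : ℝ, Continuous (fun s : ℝ => x₀ + s • eDir θ) := by
    intro θ; exact continuous_const.add (continuous_id.smul continuous_const)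
  have hslice : ∀ᵐ θ : ℝ, Set.indicator (Set.Ioo (-π) π) (fun _ => c) θ ≤ ∫ r : ℝ, g (r, θ) := by
    filter_upwards [hg_int'.prod_left_ae] with θ hθint
    by_cases hθ : θ ∈ Set.Ioo (-π) π
    · rw [Set.indicator_of_mem hθ]
      set SS : Set ℝ := Set.Ici 0 ∩ ((fun s : ℝ => x₀ + s • eDir θ) ⁻¹' ωᶜ) with hSSdef
      have hSS_closed : IsClosed SS :=
        isClosed_Ici.inter (hω_open.isClosed_compl.preimage (hecont θ))
      have hSS_ne : SS.Nonempty := by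
        refine ⟨M, le_of_lt hM0, fun hmem => ?_⟩
        have hlt := hMball hmem
        rw [Metric.mem_ball, dist_self_add_left, norm_smul_eDir, abs_of_pos hM0] at hlt
        exact lt_irrefl M hlt
      have hSS_bdd : BddBelow SS := ⟨0, fun s hs => hs.1⟩
      set ρ : ℝ := sInf SS with hρdef
      have hρmem : ρ ∈ SS := hSS_closed.csInf_mem hSS_ne hSS_bdd
      have hρ0 : 0 ≤ ρ := hρmem.1
      have hρδ : δ₀ ≤ ρ := by
        have h := Metric.infDist_le_dist_of_mem (x := x₀) hρmem.2
        rwa [dist_self_add_right, norm_smul_eDir, abs_of_nonneg hρ0] at h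
      have hsub : ∀ s ∈ Set.Ioo (ρ - b') ρ, x₀ + s • eDir θ ∈ A := by
        intro s hs
        have hs0 : (0:ℝ) < s := lt_of_le_of_lt (by linarith) hs.1
        have hmemω : x₀ + s • eDir θ ∈ ω := by
          by_contra h
          exact (notMem_of_lt_csInf hs.2 hSS_bdd) ⟨le_of_lt hs0, h⟩
        refine ⟨hmemω, ?_⟩
        have h := Metric.infDist_le_dist_of_mem (x := x₀ + s • eDir θ) hρmem.2
        rw [dist_add_left, dist_eq_norm, ← sub_smul, norm_smul_eDir] at h
        have habs : |s - ρ| < b' := abs_lt.2 ⟨by linarith [hs.1], by linarith [hs.2]⟩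
        exact lt_of_le_of_lt h (lt_of_lt_of_le habs hb'β)
      have heq : ∫ r in Set.Ioo (ρ - b') ρ, g (r, θ) = ∫ r in Set.Ioo (ρ - b') ρ, r := by
        apply setIntegral_congr_fun measurableSet_Ioo
        intro r hr
        have hr0 : (0:ℝ) < r := lt_of_le_of_lt (by linarith) hr.1
        have hrt : (r, θ) ∈ polarCoord.target := Set.mem_prod.2 ⟨hr0, hθ⟩
        have hf1 : f (polarCoord.symm (r, θ)) = 1 := by
          have hmem := (hmemB r θ).mpr (hsub r hr)
          show Set.indicator B 1 (c₀ + polarCoord.symm (r, θ)) = 1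
          rw [hsymm_eq]
          simp [Set.indicator_of_mem hmem]
        show g (r, θ) = r
        rw [hgdef, Set.indicator_of_mem hrt]
        show r * f (polarCoord.symm (r, θ)) = r
        rw [hf1, mul_one]
      have hval : ∫ r in Set.Ioo (ρ - b') ρ, (r : ℝ) = (ρ^2 - (ρ - b')^2)/2 := by
        rw [← MeasureTheory.integral_Ioc_eq_integral_Ioo,
          ← intervalIntegral.integral_of_le (by linarith), integral_id]
      calc c ≤ (ρ^2 - (ρ - b')^2)/2 := by nlinarith
        _ = ∫ r in Set.Ioo (ρ - b') ρ, g (r, θ) := by rw [heq, hval]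
        _ ≤ ∫ r : ℝ, g (r, θ) :=
            setIntegral_le_integral hθint (Filter.Eventually.of_forall fun r => hg_nonneg (r, θ))
    · rw [Set.indicator_of_notMem hθ]
      exact integral_nonneg fun r => hg_nonneg (r, θ)
  have hind_int : Integrable (Set.indicator (Set.Ioo (-π) π) (fun _ => c)) := by
    rw [integrable_indicator_iff measurableSet_Ioo]
    exact integrableOn_const measure_Ioo_lt_top.ne
  have hI_int : Integrable (fun θ : ℝ => ∫ r : ℝ, g (r, θ)) := by
    have := hg_int'.integral_prod_right
    exact this
  have h5 : ∫ θ : ℝ, Set.indicator (Set.Ioo (-π) π) (fun _ => c) θ ≤ ∫ θ : ℝ, ∫ r : ℝ, g (r, θ) :=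
    integral_mono_ae hind_int hI_int hslice
  have h6 : ∫ θ : ℝ, Set.indicator (Set.Ioo (-π) π) (fun _ => c) θ = 2 * π * c := by
    rw [integral_indicator_const c measurableSet_Ioo, measureReal_def, Real.volume_Ioo, smul_eq_mul,
      ENNReal.toReal_ofReal (by linarith [Real.pi_pos])]
    ring
  have : π * b' * (2 * δ₀ - b') = 2 * π * c := by rw [hcdef]; ring
  rw [this, h1, h2, h3, h4]
  rw [h6] at h5
  exact h5
/-- Positivity of `l(ω)`: for a bounded open simply connected set
(with Lipschitz boundary) one has `|ω^β| ≥ π R(ω) β` for `0 < β ≤ R(ω)`, and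
consequently `l(ω) ≥ (b−a)·π·R(ω)`. -/
theorem lOmega_lower_bound
    (ω : Set E2) (hω_open : IsOpen ω) (hω_bdd : Bornology.IsBounded ω)
    (hω_sc : SimplyConnectedSpace ↥ω) (hR : 0 < inRadius ω)
    (a b : ℝ) (hab : a < b) :
    (∀ β : ℝ, 0 < β → β ≤ inRadius ω →
      π * inRadius ω * β ≤ (volume {x' ∈ ω | distBd ω x' < β}).toReal) ∧
    (b - a) * π * inRadius ω ≤ lOmega ω a b := by
  classical
  set R := inRadius ω with hRdef
  have hne : (distBd ω '' ω).Nonempty := by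
    by_contra h
    rw [Set.not_nonempty_iff_eq_empty] at h
    rw [hRdef, inRadius, h, Real.sSup_empty] at hR
    exact lt_irrefl 0 hR
  have part1 : ∀ β : ℝ, 0 < β → β ≤ R →
      π * R * β ≤ (volume {x' ∈ ω | distBd ω x' < β}).toReal := by
    intro β hβ0 hβR
    set V := (volume {x' ∈ ω | distBd ω x' < β}).toReal with hV
    have hmono : ∀ t ∈ Set.Ioo (0:ℝ) R, π * min β t * (2 * t - min β t) ≤ V := by
      intro t ht
      obtain ⟨y, ⟨x₀, hx₀ω, rfl⟩, hty⟩ := exists_lt_of_lt_csSup hne ht.2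
      have hδpos : 0 < distBd ω x₀ := ht.1.trans hty
      set d := distBd ω x₀ with hd
      set b' := min β d with hb'
      have h1 : 0 < b' := lt_min hβ0 hδpos
      have hkey := key_annulus ω hω_open hω_bdd hβ0 h1 (min_le_left _ _) (min_le_right _ _)
      rw [← hd] at hkey
      refine le_trans ?_ hkey
      have hπ := Real.pi_pos
      rcases le_total β t with h | h
      · rw [hb', min_eq_left h, min_eq_left (by linarith : β ≤ d)]
        exact mul_le_mul_of_nonneg_left (by linarith) (le_of_lt (mul_pos hπ hβ0))
      · rw [min_eq_right h, hb']
        rcases le_total β d with h2 | h2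
        · rw [min_eq_left h2]
          nlinarith [hπ, mul_le_mul h hty.le ht.1.le (ht.1.le.trans h),
            mul_nonneg (mul_nonneg hπ.le (ht.1.le.trans h)) (sub_nonneg.2 h2)]
        · rw [min_eq_right h2]
          have h3 : t * t ≤ d * d := mul_self_le_mul_self ht.1.le hty.le
          nlinarith [hπ, h3]
    have hcont : Filter.Tendsto (fun t : ℝ => π * min β t * (2 * t - min β t))
        (nhdsWithin R (Set.Iio R)) (nhds (π * min β R * (2 * R - min β R))) := by
      apply Filter.Tendsto.mono_left ?_ nhdsWithin_le_nhds
      exact Continuous.tendsto (((continuous_const.mul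
        (continuous_const.min continuous_id)).mul
        ((continuous_const.mul continuous_id).sub
          (continuous_const.min continuous_id)))) R
    have hev : ∀ᶠ t in nhdsWithin R (Set.Iio R), π * min β t * (2 * t - min β t) ≤ V := by
      filter_upwards [self_mem_nhdsWithin,
        eventually_nhdsWithin_of_eventually_nhds (eventually_gt_nhds hR)] with t h1 h2
      exact hmono t ⟨h2, h1⟩
    have hle := le_of_tendsto hcont hev
    rw [min_eq_left hβR] at hle
    nlinarith [hle, mul_nonneg (mul_nonneg Real.pi_pos.le hβ0.le) (sub_nonneg.2 hβR)]
  refine ⟨part1, ?_⟩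
  have hIne : (Set.Ioc (0:ℝ) R).Nonempty := ⟨R, hR, le_refl R⟩
  have hInf : π * R ≤ sInf ((fun β => (volume {x' ∈ ω | distBd ω x' < β}).toReal / β) ''
      Set.Ioc 0 R) := by
    apply le_csInf (hIne.image _)
    rintro y ⟨β, hβ, rfl⟩
    rw [le_div_iff₀ hβ.1]
    exact part1 β hβ.1 hβ.2
  rw [lOmega, ← hRdef]
  calc (b - a) * π * R = (b - a) * (π * R) := by ring
    _ ≤ _ := mul_le_mul_of_nonneg_left hInf (by linarith)

end
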